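/- arXiv:2412.07705 — 9 statements merged into one kernel-verified Lean document; each statement's English description precedes it below -/
import Mathlib

section
/- For a topology O on a set X, O is reversible if and only if the set [O]_≅ = { f[O] : f a bijection of X } is an antichain under set inclusion (any two distinct members are incomparable). -/
/-!
Identify `f[O]` with the coinduced topology `f_* O`; inclusion of open-set families is the reverse
of Mathlib's order on topologies. Continuity of `f` says `f_* O ≤ O` and continuity of `f⁻¹` says
`O ≤ f_* O`, so `O` is reversible iff `f_* O ≤ O` forces `f_* O = O`. Since `f_*` is an order
automorphism, a comparable pair `f_* O ≤ g_* O` in the orbit transports along `g⁻¹` to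
`(g⁻¹ f)_* O ≤ O`, so the orbit is an antichain under the same condition.
-/

open Set Filter TopologicalSpace

variable {X : Type*}

/-- The family of open sets of a topology. -/
def opensOf (O : TopologicalSpace X) : Set (Set X) := {U | O.IsOpen U}

/-- The image family f[O] = { f[U] : U ∈ O } of a topology under a bijection. -/
def imgOpens (f : X ≃ X) (O : TopologicalSpace X) : Set (Set X) :=
  (Set.image f) '' opensOf O

/-- A topology is reversible iff every continuous self-bijection is a homeomorphism. -/
def Reversible (O : TopologicalSpace X) : Prop :=
  ∀ f : X ≃ X, @Continuous X X O O f → @Continuous X X O O f.symm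

/-- The homeomorphism class [O]_≅ of a topology within the topologies on X. -/
def homeoCls (O : TopologicalSpace X) : Set (TopologicalSpace X) :=
  {O' | ∃ f : X ≃ X, imgOpens f O = opensOf O'}

/-- O₁ ≼ O₂ : there is a condensation (continuous bijection) (X,O₂) → (X,O₁). -/
def Cond (O₁ O₂ : TopologicalSpace X) : Prop :=
  ∃ f : X ≃ X, @Continuous X X O₂ O₁ f

/-- The condensational equivalence class [O]_∼. -/
def simCls (O : TopologicalSpace X) : Set (TopologicalSpace X) :=
  {O' | Cond O' O ∧ Cond O O'}

lemma opensOf_injective : Function.Injective (opensOf (X := X)) :=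
  fun _ _ h => TopologicalSpace.ext h

lemma opensOf_subset_opensOf_iff {O₁ O₂ : TopologicalSpace X} :
    opensOf O₁ ⊆ opensOf O₂ ↔ O₂ ≤ O₁ :=
  TopologicalSpace.le_def.symm

lemma opensOf_coinduced (e : X ≃ X) (O : TopologicalSpace X) :
    opensOf (O.coinduced e) = imgOpens e O := by
  ext U
  refine ⟨fun hU => ⟨e ⁻¹' U, hU, e.image_preimage U⟩, ?_⟩
  rintro ⟨V, hV, rfl⟩
  change O.IsOpen (e ⁻¹' (e '' V))
  rwa [e.preimage_image]

lemma homeoCls_eq_range (O : TopologicalSpace X) :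
    homeoCls O = range fun e : X ≃ X => O.coinduced e := by
  ext O'
  simp only [homeoCls, mem_ofPred_eq, mem_range, ← opensOf_coinduced, opensOf_injective.eq_iff]

lemma reversible_iff_coinduced_le_imp_eq (O : TopologicalSpace X) :
    Reversible O ↔ ∀ e : X ≃ X, O.coinduced e ≤ O → O.coinduced e = O := by
  refine forall_congr' fun e => ?_
  rw [continuous_iff_coinduced_le, continuous_iff_le_induced, e.induced_symm]
  exact ⟨fun h hle => le_antisymm hle (h hle), fun h hle => (h hle).ge⟩

lemma coinduced_equiv_le_coinduced_iff (e : X ≃ X) {O₁ O₂ : TopologicalSpace X} :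
    O₁.coinduced e ≤ O₂.coinduced e ↔ O₁ ≤ O₂ := by
  rw [coinduced_le_iff_le_induced, ← e.coinduced_symm, coinduced_compose, e.symm_comp_self,
    coinduced_id]

lemma isAntichain_range_coinduced_iff (O : TopologicalSpace X) :
    IsAntichain (· ≤ ·) (range fun e : X ≃ X => O.coinduced e) ↔
      ∀ e : X ≃ X, O.coinduced e ≤ O → O.coinduced e = O := by
  constructor
  · intro h e hle
    by_contra hne
    exact h ⟨e, rfl⟩ ⟨Equiv.refl X, coinduced_id⟩ hne hle
  · rintro h _ ⟨f, rfl⟩ _ ⟨g, rfl⟩ hne hle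
    dsimp only at hne hle
    have hf : O.coinduced f = (O.coinduced (f.trans g.symm)).coinduced g := by
      rw [coinduced_compose, Equiv.coe_trans, ← Function.comp_assoc, g.self_comp_symm,
        Function.id_comp]
    rw [hf, coinduced_equiv_le_coinduced_iff] at hle
    exact hne (hf.trans (congrArg (·.coinduced g) (h _ hle)))

/-- O is reversible iff [O]_≅ is an antichain under inclusion. -/
theorem stmt_1 (O : TopologicalSpace X) :
    Reversible O ↔
      ∀ O₁ ∈ homeoCls O, ∀ O₂ ∈ homeoCls O, O₁ ≠ O₂ → ¬ opensOf O₁ ⊆ opensOf O₂ := by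
  simp_rw [opensOf_subset_opensOf_iff]
  rw [reversible_iff_coinduced_le_imp_eq, ← isAntichain_range_coinduced_iff, ← homeoCls_eq_range]
  exact ⟨IsAntichain.swap, IsAntichain.swap⟩
end

section
/- A topology O on X is weakly reversible (i.e., every topology O' on X with O' ∼ O is homeomorphic to O) if and only if the homeomorphism class [O]_≅ is a convex subset of the inclusion lattice of topologies on X. -/
open Set Filter TopologicalSpace

variable {X : Type*}

lemma imgOpens_eq_opensOf_coinduced (f : X ≃ X) (O : TopologicalSpace X) :
    imgOpens f O = opensOf (O.coinduced f) := by
  ext V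
  constructor
  · rintro ⟨U, hU, rfl⟩
    show O.IsOpen (f ⁻¹' (f '' U))
    rwa [Equiv.preimage_image]
  · exact fun hV => ⟨f ⁻¹' V, hV, f.image_preimage V⟩

lemma mem_homeoCls_iff {O O' : TopologicalSpace X} :
    O' ∈ homeoCls O ↔ ∃ f : X ≃ X, O.coinduced f = O' := by
  simp only [homeoCls, mem_ofPred_eq, imgOpens_eq_opensOf_coinduced, opensOf_injective.eq_iff]

lemma coinduced_mem_homeoCls (f : X ≃ X) (O : TopologicalSpace X) :
    O.coinduced f ∈ homeoCls O :=
  mem_homeoCls_iff.2 ⟨f, rfl⟩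

lemma cond_iff_exists_coinduced_le {O₁ O₂ : TopologicalSpace X} :
    Cond O₁ O₂ ↔ ∃ f : X ≃ X, O₂.coinduced f ≤ O₁ := by
  simp only [Cond, continuous_iff_coinduced_le]

lemma Equiv.coinduced_le_iff_le_coinduced_symm (f : X ≃ X) {O O' : TopologicalSpace X} :
    O.coinduced f ≤ O' ↔ O ≤ O'.coinduced f.symm := by
  rw [coinduced_le_iff_le_induced, f.coinduced_symm]

/-- O is weakly reversible iff [O]_≅ is convex. -/
theorem stmt_5 (O : TopologicalSpace X) :
    (∀ O' ∈ simCls O, O' ∈ homeoCls O) ↔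
      (∀ O₁ ∈ homeoCls O, ∀ O₂ ∈ homeoCls O, ∀ O' : TopologicalSpace X,
        opensOf O₁ ⊆ opensOf O' → opensOf O' ⊆ opensOf O₂ → O' ∈ homeoCls O) := by
  simp only [opensOf_subset_opensOf_iff]
  constructor
  · rintro hweak O₁ h₁ O₂ h₂ O' hO'₁ hO₂'
    obtain ⟨f, rfl⟩ := mem_homeoCls_iff.1 h₁
    obtain ⟨g, rfl⟩ := mem_homeoCls_iff.1 h₂
    have hback : O'.coinduced f.symm ≤ O := by
      rwa [f.symm.coinduced_le_iff_le_coinduced_symm, Equiv.symm_symm]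
    exact hweak O' ⟨cond_iff_exists_coinduced_le.2 ⟨g, hO₂'⟩,
      cond_iff_exists_coinduced_le.2 ⟨f.symm, hback⟩⟩
  · rintro hconvex O' ⟨hO', hO⟩
    obtain ⟨f, hf⟩ := cond_iff_exists_coinduced_le.1 hO'
    obtain ⟨g, hg⟩ := cond_iff_exists_coinduced_le.1 hO
    exact hconvex _ (coinduced_mem_homeoCls g.symm O) _ (coinduced_mem_homeoCls f O) O'
      ((g.coinduced_le_iff_le_coinduced_symm).1 hg) hf
end

section
/- If O is a non-reversible topology on X, then no maximal chain L in ([O]_∼, ⊆) has a largest element or a smallest element. -/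
open Set Filter TopologicalSpace

variable {X : Type*}

lemma contPre {t₁ t₂ : TopologicalSpace X} {f : X → X} (hf : @Continuous X X t₁ t₂ f)
    {s : Set X} (hs : t₂.IsOpen s) : t₁.IsOpen (f ⁻¹' s) :=
  (@continuous_def X X t₁ t₂ f).mp hf s hs

lemma contComp {t₁ t₂ t₃ : TopologicalSpace X} {g f : X → X}
    (hg : @Continuous X X t₂ t₃ g) (hf : @Continuous X X t₁ t₂ f) :
    @Continuous X X t₁ t₃ (g ∘ f) :=
  (@continuous_def X X t₁ t₃ (g ∘ f)).mpr fun s hs => contPre hf (contPre hg hs)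

lemma cond_trans' {O₁ O₂ O₃ : TopologicalSpace X} (h₁ : Cond O₁ O₂) (h₂ : Cond O₂ O₃) :
    Cond O₁ O₃ := by
  obtain ⟨f, hf⟩ := h₁
  obtain ⟨g, hg⟩ := h₂
  exact ⟨g.trans f, by rw [Equiv.coe_trans]; exact contComp hf hg⟩

lemma cond_induced (O₁ : TopologicalSpace X) (g : X ≃ X) :
    Cond O₁ (O₁.induced ⇑g) ∧ Cond (O₁.induced ⇑g) O₁ := by
  constructor
  · exact ⟨g, continuous_induced_dom⟩
  · refine ⟨g.symm, ?_⟩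
    rw [continuous_iff_le_induced, induced_compose, Equiv.self_comp_symm, induced_id]

lemma mem_simCls_induced {O O₁ : TopologicalSpace X} (h₁ : O₁ ∈ simCls O) (g : X ≃ X) :
    O₁.induced ⇑g ∈ simCls O := by
  obtain ⟨h₁a, h₁b⟩ := h₁
  obtain ⟨c1, c2⟩ := cond_induced O₁ g
  exact ⟨cond_trans' c2 h₁a, cond_trans' h₁b c1⟩

lemma mem_simCls_self (O : TopologicalSpace X) : O ∈ simCls O :=
  ⟨⟨Equiv.refl X, continuous_id⟩, ⟨Equiv.refl X, continuous_id⟩⟩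

lemma lemA (O₁ O₂ : TopologicalSpace X) (g : X ≃ X)
    (hg : @Continuous X X O₁ O₂ g) (hg' : ¬ @Continuous X X O₂ O₁ ⇑g.symm) :
    opensOf O₂ ⊂ opensOf (O₁.induced ⇑g.symm) := by
  rw [ssubset_iff_subset_ne]
  constructor
  · intro V hV
    show ∃ u, O₁.IsOpen u ∧ ⇑g.symm ⁻¹' u = V
    refine ⟨⇑g ⁻¹' V, contPre hg hV, ?_⟩
    rw [Set.preimage_preimage]
    simp
  · intro heq
    apply hg'
    rw [continuous_def]
    intro s hs
    have hmem : ⇑g.symm ⁻¹' s ∈ opensOf (O₁.induced ⇑g.symm) :=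
      (⟨s, hs, rfl⟩ : ∃ u, O₁.IsOpen u ∧ ⇑g.symm ⁻¹' u = ⇑g.symm ⁻¹' s)
    rw [← heq] at hmem
    exact hmem

lemma lemA' (O₁ O₂ : TopologicalSpace X) (h : X ≃ X)
    (hh : @Continuous X X O₂ O₁ h) (hh' : ¬ @Continuous X X O₁ O₂ ⇑h.symm) :
    opensOf (O₁.induced ⇑h) ⊂ opensOf O₂ := by
  rw [continuous_def] at hh'
  push_neg at hh'
  obtain ⟨V, hV, hVn⟩ := hh'
  rw [ssubset_iff_subset_ne]
  constructor
  · intro s hs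
    have hs' : ∃ u, O₁.IsOpen u ∧ ⇑h ⁻¹' u = s := hs
    obtain ⟨u, hu, rfl⟩ := hs'
    exact contPre hh hu
  · intro heq
    apply hVn
    have hmem : V ∈ opensOf (O₁.induced ⇑h) := heq ▸ hV
    have hmem' : ∃ u, O₁.IsOpen u ∧ ⇑h ⁻¹' u = V := hmem
    obtain ⟨u, hu, hEq⟩ := hmem'
    have : ⇑h.symm ⁻¹' V = u := by
      rw [← hEq, Set.preimage_preimage]
      simp
    rw [this]
    exact hu

lemma nonrev_of_homeo {O₁ O₂ : TopologicalSpace X} (g : X ≃ X)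
    (hg : @Continuous X X O₁ O₂ g) (hg' : @Continuous X X O₂ O₁ ⇑g.symm)
    (h : ¬ Reversible O₁) : ¬ Reversible O₂ := by
  intro hrev
  apply h
  intro f hf
  have hf' : @Continuous X X O₂ O₂ ⇑((g.symm.trans f).trans g) := by
    have : ⇑((g.symm.trans f).trans g) = ⇑g ∘ ⇑f ∘ ⇑g.symm := by
      ext x; simp
    rw [this]
    exact contComp hg (contComp hf hg')
  have h2 := hrev _ hf'
  have : ⇑f.symm = ⇑g.symm ∘ ⇑(((g.symm.trans f).trans g).symm) ∘ ⇑g := by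
    ext x; simp
  rw [this]
  exact contComp hg' (contComp h2 hg)

lemma key_up {O O' : TopologicalSpace X} (hO : ¬ Reversible O) (h' : O' ∈ simCls O) :
    ∃ O'' ∈ simCls O, opensOf O' ⊂ opensOf O'' := by
  obtain ⟨g, hg⟩ := h'.1
  by_cases hgs : @Continuous X X O' O ⇑g.symm
  · have hO' : ¬ Reversible O' := nonrev_of_homeo g hg hgs hO
    rw [Reversible] at hO'
    push_neg at hO'
    obtain ⟨f, hf, hfs⟩ := hO'
    refine ⟨O'.induced ⇑f.symm, ?_, lemA O' O' f hf hfs⟩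
    exact mem_simCls_induced h' f.symm
  · exact ⟨O.induced ⇑g.symm, mem_simCls_induced (mem_simCls_self O) g.symm,
      lemA O O' g hg hgs⟩

lemma key_down {O O' : TopologicalSpace X} (hO : ¬ Reversible O) (h' : O' ∈ simCls O) :
    ∃ O'' ∈ simCls O, opensOf O'' ⊂ opensOf O' := by
  obtain ⟨h, hh⟩ := h'.2
  by_cases hhs : @Continuous X X O O' ⇑h.symm
  · have hO' : ¬ Reversible O' :=
      nonrev_of_homeo h.symm hhs (by simpa using hh) hO
    rw [Reversible] at hO'
    push_neg at hO'
    obtain ⟨f, hf, hfs⟩ := hO'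
    refine ⟨O'.induced ⇑f, mem_simCls_induced h' f, lemA' O' O' f hf hfs⟩
  · exact ⟨O.induced ⇑h, mem_simCls_induced (mem_simCls_self O) h,
      lemA' O O' h hh hhs⟩

/-- if O is non-reversible, no maximal chain in ([O]_∼, ⊆)
has a largest or a smallest element. -/
theorem stmt_6 (O : TopologicalSpace X) (hO : ¬ Reversible O)
    (L : Set (TopologicalSpace X)) (hL : L ⊆ simCls O)
    (hchain : IsChain (fun O₁ O₂ => opensOf O₁ ⊆ opensOf O₂) L)
    (hmax : ∀ L' : Set (TopologicalSpace X), L ⊆ L' → L' ⊆ simCls O →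
      IsChain (fun O₁ O₂ => opensOf O₁ ⊆ opensOf O₂) L' → L' = L) :
    (¬ ∃ m ∈ L, ∀ x ∈ L, opensOf x ⊆ opensOf m) ∧
    (¬ ∃ m ∈ L, ∀ x ∈ L, opensOf m ⊆ opensOf x) := by
  constructor
  · rintro ⟨m, hmL, hmx⟩
    obtain ⟨O'', hO'', hlt⟩ := key_up hO (hL hmL)
    have hchain' : IsChain (fun O₁ O₂ => opensOf O₁ ⊆ opensOf O₂) (insert O'' L) := by
      refine hchain.insert ?_
      intro b hb _
      exact Or.inr ((hmx b hb).trans hlt.subset)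
    have hins : insert O'' L = L :=
      hmax _ (Set.subset_insert _ _) (Set.insert_subset hO'' hL) hchain'
    have hmem : O'' ∈ L := hins ▸ Set.mem_insert _ _
    exact hlt.not_subset (hmx O'' hmem)
  · rintro ⟨m, hmL, hmx⟩
    obtain ⟨O'', hO'', hlt⟩ := key_down hO (hL hmL)
    have hchain' : IsChain (fun O₁ O₂ => opensOf O₁ ⊆ opensOf O₂) (insert O'' L) := by
      refine hchain.insert ?_
      intro b hb _
      exact Or.inl (hlt.subset.trans (hmx b hb))
    have hins : insert O'' L = L :=
      hmax _ (Set.subset_insert _ _) (Set.insert_subset hO'' hL) hchain'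
    have hmem : O'' ∈ L := hins ▸ Set.mem_insert _ _
    exact hlt.not_subset (hmx O'' hmem)
end

section
/- Let X be a sequential space with unique sequential limits, let (a_n) be an injective sequence converging to x with x ∉ {a_n : n}, and let {M_α : α < 𝔠} be a maximal almost disjoint family of infinite subsets of ℕ. In the topology O* generated by the original topology together with the sets X ∖ {a_n : n ∈ M_α}, the point x lies in the closure of A_ω = {a_n : n ∈ ℕ}. -/
open Filter Topology Set

lemma mem_closure_aux {X : Type*} [T : TopologicalSpace X] {s : Set X} {x : X}
    (h : ∀ o : Set X, IsOpen o → x ∈ o → (o ∩ s).Nonempty) : x ∈ closure s :=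
  mem_closure_iff.mpr h

/-- in the topology O* generated by O together with the complements
of the sets {a_n : n ∈ M} for M in a mad family of size 𝔠, the limit point x
lies in the O*-closure of A_ω = {a_n : n ∈ ℕ}. -/
theorem stmt_12 {X : Type*} [t : TopologicalSpace X] [SequentialSpace X]
    (huniq : ∀ (u : ℕ → X) (y z : X),
      Tendsto u atTop (𝓝 y) → Tendsto u atTop (𝓝 z) → y = z)
    (a : ℕ → X) (ha : Function.Injective a)
    (x : X) (hconv : Tendsto a atTop (𝓝 x)) (hx : x ∉ Set.range a)
    (𝒜 : Set (Set ℕ))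
    (hinf : ∀ M ∈ 𝒜, M.Infinite)
    (had : ∀ M ∈ 𝒜, ∀ N ∈ 𝒜, M ≠ N → (M ∩ N).Finite)
    (hmad : ∀ M : Set ℕ, M.Infinite → ∃ N ∈ 𝒜, (M ∩ N).Infinite)
    (hcard : Cardinal.mk 𝒜 = Cardinal.continuum) :
    x ∈ @closure X
      (TopologicalSpace.generateFrom
        ({U : Set X | IsOpen U} ∪ {s : Set X | ∃ M ∈ 𝒜, s = (a '' M)ᶜ}))
      (Set.range a) := by
  classical
  set G : Set (Set X) :=
    ({U : Set X | IsOpen U} ∪ {s : Set X | ∃ M ∈ 𝒜, s = (a '' M)ᶜ}) with hG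
  refine mem_closure_aux (T := TopologicalSpace.generateFrom G) ?_
  have key : ∀ o : Set X, TopologicalSpace.GenerateOpen G o → x ∈ o →
      ∃ K : Finset (Set ℕ), ↑K ⊆ 𝒜 ∧ ∃ C : Set ℕ, C.Finite ∧
        ∀ n, n ∉ C → (∀ M ∈ K, n ∉ M) → a n ∈ o := by
    intro o ho
    induction ho with
    | basic s hs =>
      intro hxs
      rcases hs with hs | ⟨M, hM, rfl⟩
      · refine ⟨∅, by simp, {n | a n ∉ s}, ?_, ?_⟩
        · have : ∀ᶠ n in atTop, a n ∈ s := hconv (hs.mem_nhds hxs)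
          rw [← Nat.cofinite_eq_atTop] at this
          simpa using this
        · intro n hn _
          simpa using hn
      · refine ⟨{M}, by simpa using hM, ∅, finite_empty, ?_⟩
        intro n _ hn
        have hnM : n ∉ M := hn M (by simp)
        intro hmem
        obtain ⟨m, hm, hma⟩ := hmem
        exact hnM (ha hma ▸ hm)
    | univ => exact fun _ => ⟨∅, by simp, ∅, finite_empty, fun _ _ _ => trivial⟩
    | inter s u hs hu ihs ihu =>
      intro hx'
      obtain ⟨K₁, hK₁, C₁, hC₁, h₁⟩ := ihs hx'.1
      obtain ⟨K₂, hK₂, C₂, hC₂, h₂⟩ := ihu hx'.2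
      refine ⟨K₁ ∪ K₂, by simp [hK₁, hK₂, Set.union_subset], C₁ ∪ C₂, hC₁.union hC₂, ?_⟩
      intro n hn hM
      simp only [Finset.mem_union] at hM
      exact ⟨h₁ n (fun h => hn (Or.inl h)) (fun M hMm => hM M (Or.inl hMm)),
        h₂ n (fun h => hn (Or.inr h)) (fun M hMm => hM M (Or.inr hMm))⟩
    | sUnion S hS ih =>
      intro hx'
      obtain ⟨s, hsS, hxs⟩ := hx'
      obtain ⟨K, hK, C, hC, h⟩ := ih s hsS hxs
      exact ⟨K, hK, C, hC, fun n hn hM => ⟨s, hsS, h n hn hM⟩⟩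
  intro o ho hxo
  obtain ⟨K, hK𝒜, C, hC, hmem⟩ := key o ho hxo
  have hAinf : 𝒜.Infinite := by
    rw [← Set.infinite_coe_iff, Cardinal.infinite_iff, hcard]
    exact Cardinal.aleph0_le_continuum
  obtain ⟨N, hN𝒜, hNK⟩ := (hAinf.diff K.finite_toSet).nonempty
  have hNinf : N.Infinite := hinf N hN𝒜
  have hfin : (N ∩ (C ∪ ⋃ M ∈ K, M)).Finite := by
    have hsub : N ∩ (C ∪ ⋃ M ∈ K, M) ⊆ C ∪ ⋃ M ∈ K, (M ∩ N) := by
      intro n hn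
      simp only [Set.mem_union, Set.mem_iUnion, Set.mem_inter_iff] at *
      tauto
    refine Set.Finite.subset (hC.union ?_) hsub
    refine Set.Finite.biUnion K.finite_toSet fun M hM => ?_
    exact had M (hK𝒜 hM) N hN𝒜 (fun h => hNK (h ▸ hM))
  have hdiff : (N \ (C ∪ ⋃ M ∈ K, M)).Infinite := by
    have h := hNinf.diff hfin
    rwa [Set.diff_self_inter] at h
  obtain ⟨n, hnN, hn⟩ := hdiff.nonempty
  simp only [Set.mem_union, Set.mem_iUnion, not_or, not_exists] at hn
  refine ⟨a n, hmem n hn.1 ?_, Set.mem_range_self n⟩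
  intro M hM hnM
  exact hn.2 M hM hnM
end

section
/- Let X be a sequential space with unique sequential limits, let (a_n) be an injective sequence converging to x with x ∉ {a_n : n}, and let {M_α : α < 𝔠} be a mad family on ℕ. In the topology O* generated by O and the sets X ∖ {a_n : n ∈ M_α}, the set A_ω = {a_n : n ∈ ℕ} is sequentially closed. -/
open Filter Topology Set

/-!
Let `a ∘ k` converge in `O*` to a point `y` outside `range a`. For each `M` in the mad family,
`X ∖ a '' M` is an `O*`-neighbourhood of `y`, so `k` takes values in `M` only finitely often.
By maximality `range k` is finite, so `a ∘ k` is frequently equal to some `a m`; then `a m`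
specializes to `y`, and uniqueness of limits applied to the constant sequence `a m` forces
`y = a m`.
-/

theorem finite_preimage_of_tendsto_comp {α X : Type*} [TopologicalSpace X] {a : α → X}
    {k : ℕ → α} {y : X} (hlim : Tendsto (a ∘ k) atTop (𝓝 y)) (hy : y ∉ range a)
    {N : Set α} (hN : IsOpen (a '' N)ᶜ) : (k ⁻¹' N).Finite := by
  have hev : ∀ᶠ n in atTop, a (k n) ∈ (a '' N)ᶜ :=
    hlim (hN.mem_nhds fun hyN => hy (image_subset_range a N hyN))
  rw [← Nat.cofinite_eq_atTop, eventually_cofinite] at hev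
  exact hev.subset fun n hn => not_not_intro (mem_image_of_mem a hn)

theorem exists_frequently_eq_of_finite_preimage {α : Type*} {𝒜 : Set (Set α)}
    (hmad : ∀ M : Set α, M.Infinite → ∃ N ∈ 𝒜, (M ∩ N).Infinite) {k : ℕ → α}
    (hk : ∀ N ∈ 𝒜, (k ⁻¹' N).Finite) : ∃ m, ∃ᶠ n in atTop, k n = m := by
  have hrange : (range k).Finite := by
    by_contra hinf
    obtain ⟨N, hN, hinter⟩ := hmad _ hinf
    exact hinter (image_preimage_eq_range_inter ▸ (hk N hN).image k)
  obtain ⟨m, -, hm⟩ := (hrange.frequently_exists (l := atTop) (p := fun m n => k n = m)).1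
    (Frequently.of_forall fun n => ⟨k n, mem_range_self n, rfl⟩)
  exact ⟨m, hm⟩

theorem isSeqClosed_range_of_isOpen_compl_image {X : Type*} [TopologicalSpace X]
    (huniq : ∀ (u : ℕ → X) (y z : X),
      Tendsto u atTop (𝓝 y) → Tendsto u atTop (𝓝 z) → y = z)
    {a : ℕ → X} {𝒜 : Set (Set ℕ)}
    (hmad : ∀ M : Set ℕ, M.Infinite → ∃ N ∈ 𝒜, (M ∩ N).Infinite)
    (hopen : ∀ N ∈ 𝒜, IsOpen (a '' N)ᶜ) : IsSeqClosed (range a) := by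
  intro u y hu hlim
  by_contra hy
  choose k hk using hu
  obtain rfl : a ∘ k = u := funext hk
  obtain ⟨m, hm⟩ := exists_frequently_eq_of_finite_preimage hmad fun N hN =>
    finite_preimage_of_tendsto_comp hlim hy (hopen N hN)
  have hspec : a m ⤳ y := specializes_iff_mem_closure.2 <|
    mem_closure_of_frequently_of_tendsto (hm.mono fun n hn => by simp [hn]) hlim
  exact hy ⟨m, huniq _ _ _ tendsto_const_nhds (tendsto_const_nhds.mono_right hspec)⟩

theorem stmt_13_general {X : Type*} [t : TopologicalSpace X]
    (huniq : ∀ (u : ℕ → X) (y z : X),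
      Tendsto u atTop (𝓝 y) → Tendsto u atTop (𝓝 z) → y = z)
    (a : ℕ → X)
    (𝒜 : Set (Set ℕ))
    (hmad : ∀ M : Set ℕ, M.Infinite → ∃ N ∈ 𝒜, (M ∩ N).Infinite) :
    @IsSeqClosed X
      (TopologicalSpace.generateFrom
        ({U : Set X | IsOpen U} ∪ {s : Set X | ∃ M ∈ 𝒜, s = (a '' M)ᶜ}))
      (Set.range a) := by
  set t' := TopologicalSpace.generateFrom
    ({U : Set X | IsOpen U} ∪ {s : Set X | ∃ M ∈ 𝒜, s = (a '' M)ᶜ})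
  have hle : t' ≤ t := fun s hs => TopologicalSpace.GenerateOpen.basic s (Or.inl hs)
  refine @isSeqClosed_range_of_isOpen_compl_image X t' ?_ a 𝒜 hmad
    fun N hN => TopologicalSpace.GenerateOpen.basic _ (Or.inr ⟨N, hN, rfl⟩)
  exact fun u y z hy hz =>
    huniq u y z (hy.mono_right (nhds_mono hle)) (hz.mono_right (nhds_mono hle))

/-- in the topology O* generated by O together with the complements
of the sets {a_n : n ∈ M} for M in a mad family of size 𝔠, the set
A_ω = {a_n : n ∈ ℕ} is sequentially closed. -/
theorem stmt_13 {X : Type*} [t : TopologicalSpace X] [SequentialSpace X]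
    (huniq : ∀ (u : ℕ → X) (y z : X),
      Tendsto u atTop (𝓝 y) → Tendsto u atTop (𝓝 z) → y = z)
    (a : ℕ → X) (ha : Function.Injective a)
    (x : X) (hconv : Tendsto a atTop (𝓝 x)) (hx : x ∉ Set.range a)
    (𝒜 : Set (Set ℕ))
    (hinf : ∀ M ∈ 𝒜, M.Infinite)
    (had : ∀ M ∈ 𝒜, ∀ N ∈ 𝒜, M ≠ N → (M ∩ N).Finite)
    (hmad : ∀ M : Set ℕ, M.Infinite → ∃ N ∈ 𝒜, (M ∩ N).Infinite)
    (hcard : Cardinal.mk 𝒜 = Cardinal.continuum) :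
    @IsSeqClosed X
      (TopologicalSpace.generateFrom
        ({U : Set X | IsOpen U} ∪ {s : Set X | ∃ M ∈ 𝒜, s = (a '' M)ᶜ}))
      (Set.range a) :=
  stmt_13_general (t := t) huniq a 𝒜 hmad
end

section
/- Every sequential topological space in which each sequence has at most one limit satisfies: if it is weakly reversible then it is reversible. Equivalently, a sequential space with unique sequential limits that is not reversible is not weakly reversible. -/
/-!
If the inverse of a continuous bijection `f` is not continuous, sequentiality and uniqueness of
limits give a sequence `w` with `f ∘ w → f y`, `y ∉ range w` and no convergent subsequence, so
that every subset of `range w` is closed. Coarsen the topology at `y` by asking neighbourhoods of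
`y` to also belong to a free ultrafilter `𝒱` on `range w`. Then `id` and `f` are continuous
bijections between the two topologies in opposite directions, but the coarser topology is not
sequential: `range w` is sequentially closed there, because a free ultrafilter is not the limit
of any sequence, yet `y` lies in its closure.
-/

open Filter Topology Set Function

universe u

namespace Ultrafilter

variable {α : Type*}

theorem not_tendsto_atTop_of_injective (𝒰 : Ultrafilter α) {e : ℕ → α} (he : Injective e) :
    ¬Tendsto e atTop 𝒰 := by
  intro h
  -- `e '' {even}` separates the even and odd terms, which both occur frequently.
  have hmem : ∀ n, e n ∈ e '' {n | Even n} ↔ Even n := fun n => he.mem_set_image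
  rcases 𝒰.em (· ∈ e '' {n | Even n}) with heven | hodd
  · obtain ⟨n, hn, hodd⟩ := ((h.eventually heven).and_frequently Nat.frequently_odd).exists
    exact Nat.not_even_iff_odd.2 hodd ((hmem n).1 hn)
  · obtain ⟨n, hn, heven⟩ := ((h.eventually hodd).and_frequently Nat.frequently_even).exists
    exact hn ((hmem n).2 heven)

theorem not_tendsto_atTop_of_le_cofinite {𝒰 : Ultrafilter α} (h𝒰 : (𝒰 : Filter α) ≤ cofinite)
    (s : ℕ → α) : ¬Tendsto s atTop (𝒰 : Filter α) := by
  intro hs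
  -- Replacing each term by a chosen index of its value gives a sequence in `ℕ` with finite
  -- fibres, which has a strictly monotone subsequence.
  have hfirst : Tendsto (invFun s ∘ s) atTop cofinite := by
    refine le_cofinite_iff_eventually_ne.2 fun k => eventually_map.2 ?_
    filter_upwards [eventually_map.1 (le_cofinite_iff_eventually_ne.1 (hs.mono_right h𝒰) (s k))]
      with n hn hnk
    exact hn (by rw [← hnk, comp_apply, invFun_eq (f := s) ⟨n, rfl⟩])
  rw [Nat.cofinite_eq_atTop] at hfirst
  obtain ⟨φ, hφ, hmono⟩ := strictMono_subseq_of_tendsto_atTop hfirst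
  exact 𝒰.not_tendsto_atTop_of_injective (Injective.of_comp (f := invFun s) hmono.injective)
    (hs.comp hφ.tendsto_atTop)

end Ultrafilter

section NoConvergentSubseq

variable {X : Type*} [TopologicalSpace X] {x : ℕ → X}

theorem tendsto_cofinite_of_not_tendsto_subseq
    (hx : ∀ (l : X) (φ : ℕ → ℕ), StrictMono φ → ¬Tendsto (x ∘ φ) atTop (𝓝 l)) :
    Tendsto x atTop cofinite := by
  refine le_cofinite_iff_eventually_ne.2 fun a => ?_
  by_contra h
  obtain ⟨φ, hφ, hxφ⟩ := extraction_of_frequently_atTop (not_eventually.1 h)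
  exact hx a φ hφ (tendsto_const_nhds.congr fun n => (not_not.1 (hxφ n)).symm)

theorem isClosed_of_subset_range_of_not_tendsto [SequentialSpace X] [T1Space X]
    (hx : ∀ (l : X) (φ : ℕ → ℕ), StrictMono φ → ¬Tendsto (x ∘ φ) atTop (𝓝 l))
    {B : Set X} (hB : B ⊆ range x) : IsClosed B := by
  obtain ⟨P, rfl⟩ : ∃ P : Set ℕ, x '' P = B := ⟨x ⁻¹' B, image_preimage_eq_of_subset hB⟩
  rcases P.finite_or_infinite with hP | hP
  · exact (hP.image x).isClosed
  · have hrange : x '' P = range (x ∘ Nat.nth (· ∈ P)) := by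
      rw [range_comp, Nat.range_nth_of_infinite (p := (· ∈ P)) hP]; rfl
    rw [hrange]
    exact isClosed_range_of_not_tendsto fun l φ hφ => hx l _ ((Nat.nth_strictMono hP).comp hφ)

end NoConvergentSubseq

section AdjoinUltrafilter

variable {X : Type*} [t : TopologicalSpace X] {A : Set X} {y : X} {𝒱 : Ultrafilter X}

theorem isSeqClosed_sup_nhdsAdjoint [T1Space X] (hA : ∀ B ⊆ A, IsClosed B)
    (h𝒱 : (𝒱 : Filter X) ≤ cofinite) : @IsSeqClosed X (t ⊔ nhdsAdjoint y 𝒱) A := by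
  intro s p hsA hsp
  by_contra hpA
  by_cases hpy : p = y
  · subst hpy
    refine Ultrafilter.not_tendsto_atTop_of_le_cofinite h𝒱 s fun Q hQ => mem_map.2 ?_
    have hW : IsOpen[t ⊔ nhdsAdjoint p 𝒱] (A \ Q)ᶜ :=
      isOpen_sup.2 ⟨(hA _ sdiff_subset).isOpen_compl,
        fun _ => mem_of_superset hQ fun _ hq hAQ => hAQ.2 hq⟩
    filter_upwards [hsp.eventually_mem (@IsOpen.mem_nhds X (t ⊔ nhdsAdjoint p 𝒱) _ _ hW
      fun h => hpA h.1)] with n hn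
    exact not_not.1 fun hq => hn ⟨hsA n, hq⟩
  · have hW : IsOpen[t ⊔ nhdsAdjoint y 𝒱] (A ∪ {y})ᶜ :=
      isOpen_sup.2 ⟨((hA A subset_rfl).union isClosed_singleton).isOpen_compl,
        fun h => (h (Or.inr rfl)).elim⟩
    obtain ⟨n, hn⟩ := (hsp.eventually_mem (@IsOpen.mem_nhds X (t ⊔ nhdsAdjoint y 𝒱) _ _ hW
      (by simp [hpA, hpy]))).exists
    exact hn (Or.inl (hsA n))

theorem mem_closure_sup_nhdsAdjoint (hA𝒱 : A ∈ 𝒱) : y ∈ closure[t ⊔ nhdsAdjoint y 𝒱] A :=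
  (@mem_closure_iff X (t ⊔ nhdsAdjoint y 𝒱) _ _).2 fun _ hW hyW =>
    Ultrafilter.nonempty_of_mem (inter_mem ((isOpen_sup.1 hW).2 hyW) hA𝒱)

theorem not_sequentialSpace_sup_nhdsAdjoint [T1Space X] (hA : ∀ B ⊆ A, IsClosed B) (hyA : y ∉ A)
    (hA𝒱 : A ∈ 𝒱) (h𝒱 : (𝒱 : Filter X) ≤ cofinite) :
    ¬@SequentialSpace X (t ⊔ nhdsAdjoint y 𝒱) := fun hseq =>
  hyA <| @IsClosed.closure_subset X (t ⊔ nhdsAdjoint y 𝒱) A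
    (@IsSeqClosed.isClosed X (t ⊔ nhdsAdjoint y 𝒱) hseq A (isSeqClosed_sup_nhdsAdjoint hA h𝒱))
    _ (mem_closure_sup_nhdsAdjoint hA𝒱)

end AdjoinUltrafilter

theorem SequentialSpace.t1Space_of_tendsto_unique {X : Type*} [TopologicalSpace X]
    [SequentialSpace X]
    (huniq : ∀ (u : ℕ → X) (y z : X), Tendsto u atTop (𝓝 y) → Tendsto u atTop (𝓝 z) → y = z) :
    T1Space X :=
  ⟨fun x => IsSeqClosed.isClosed fun s p hs hp =>
    huniq s p x hp (tendsto_const_nhds.congr fun n => (hs n).symm)⟩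

theorem exists_not_tendsto_subseq_of_tendsto_comp {X Z : Type*} [TopologicalSpace X]
    [TopologicalSpace Z] {f : X → Z} (hf : Continuous f) (hf_inj : Injective f)
    (huniq : ∀ (u : ℕ → Z) (y z : Z), Tendsto u atTop (𝓝 y) → Tendsto u atTop (𝓝 z) → y = z)
    {v : ℕ → X} {y : X} (hfv : Tendsto (f ∘ v) atTop (𝓝 (f y))) (hv : ¬Tendsto v atTop (𝓝 y)) :
    ∃ w : ℕ → X, Tendsto (f ∘ w) atTop (𝓝 (f y)) ∧ y ∉ range w ∧
      ∀ (l : X) (φ : ℕ → ℕ), StrictMono φ → ¬Tendsto (w ∘ φ) atTop (𝓝 l) := by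
  obtain ⟨U, hU, hvU⟩ := not_tendsto_iff_exists_frequently_notMem.1 hv
  obtain ⟨ψ, hψ, hψU⟩ := extraction_of_frequently_atTop hvU
  refine ⟨v ∘ ψ, hfv.comp hψ.tendsto_atTop,
    fun ⟨n, hn⟩ => hψU n (show (v ∘ ψ) n ∈ U from hn ▸ mem_of_mem_nhds hU), ?_⟩
  intro l φ hφ hl
  obtain rfl : l = y := hf_inj <|
    huniq _ _ _ ((hf.tendsto l).comp hl) (hfv.comp (hψ.comp hφ).tendsto_atTop)
  obtain ⟨n, hn⟩ := (hl.eventually_mem hU).exists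
  exact hψU _ hn

/-- a sequential space with unique sequential limits which is
weakly reversible is reversible. -/
theorem stmt_14 {X : Type u} [TopologicalSpace X] [SequentialSpace X]
    (huniq : ∀ (u : ℕ → X) (y z : X),
      Tendsto u atTop (𝓝 y) → Tendsto u atTop (𝓝 z) → y = z)
    (hwr : ∀ (Y : Type u) [TopologicalSpace Y] (f : X → Y) (g : Y → X),
      Function.Bijective f → Continuous f → Function.Bijective g → Continuous g →
      Nonempty (X ≃ₜ Y)) :
    ∀ f : X ≃ X, Continuous (⇑f) → Continuous (⇑f.symm) := by
  intro f hf
  have := SequentialSpace.t1Space_of_tendsto_unique huniq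
  refine SeqContinuous.continuous fun u a hu => ?_
  by_contra hnot
  obtain ⟨w, hfw, hyw, hw⟩ := exists_not_tendsto_subseq_of_tendsto_comp hf f.injective huniq
    (by simpa [comp_def] using hu) hnot
  set 𝒱 := Ultrafilter.of (map w atTop)
  have h𝒱 : (𝒱 : Filter X) ≤ map w atTop := Ultrafilter.of_le _
  obtain ⟨h⟩ := @hwr X (_ ⊔ nhdsAdjoint (f.symm a) 𝒱) id f bijective_id
    (continuous_id_of_le le_sup_left) f.bijective
    (continuous_sup_dom.2
      ⟨hf, continuous_nhdsAdjoint_dom.2 ((tendsto_map'_iff.2 hfw).mono_left h𝒱)⟩)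
  exact not_sequentialSpace_sup_nhdsAdjoint (fun _ => isClosed_of_subset_range_of_not_tendsto hw)
    hyw (h𝒱 range_mem_map) (h𝒱.trans (tendsto_cofinite_of_not_tendsto_subseq hw))
    (@IsQuotientMap.sequentialSpace X X _ (_ ⊔ nhdsAdjoint (f.symm a) 𝒱) _ h
      (@Homeomorph.isQuotientMap X X _ (_ ⊔ nhdsAdjoint (f.symm a) 𝒱) h))
end

section
/- Every metrizable topological space that is weakly reversible is reversible. -/
/-!
Let `f : X → X` be a continuous bijection of a first countable Hausdorff space whose inverse is
discontinuous at `f a`. Then there is a sequence `y` avoiding a neighbourhood of `a` with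
`f ∘ y → f a`; it has no cluster point, so its range `S` is closed and discrete. Take an
ultrafilter `F` finer than the tails of `y` and coarsen the topology of `X` just enough to make
`F` converge to `a`. Then `id` is a continuous bijection onto the coarsened space and `f` one
back, so by weak reversibility the coarsened space is homeomorphic to `X`, hence first countable.
But the trace of its neighbourhood filter of `a` on `S` is `F`, and a countably generated
ultrafilter is principal, which would give `y` a cluster point.
-/

open Filter Topology Set Function

universe u

def WeaklyReversible (X : Type u) [TopologicalSpace X] : Prop :=
  ∀ (Y : Type u) [TopologicalSpace Y] (f : X → Y) (g : Y → X),
    Bijective f → Continuous f → Bijective g → Continuous g → Nonempty (X ≃ₜ Y)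

theorem Set.Infinite.exists_disjoint_infinite_subsets {α : Type*} {s : Set α} (hs : s.Infinite) :
    ∃ t₁ ⊆ s, ∃ t₂ ⊆ s, Disjoint t₁ t₂ ∧ t₁.Infinite ∧ t₂.Infinite := by
  let e := hs.natEmbedding
  have he : Injective fun n => (e n : α) := Subtype.val_injective.comp e.injective
  have heven : Injective fun k : ℕ => 2 * k := fun a b (h : 2 * a = 2 * b) => by omega
  have hodd : Injective fun k : ℕ => 2 * k + 1 := fun a b (h : 2 * a + 1 = 2 * b + 1) => by omega
  refine ⟨range fun k => (e (2 * k) : α), range_subset_iff.2 fun k => (e _).2,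
    range fun k => (e (2 * k + 1) : α), range_subset_iff.2 fun k => (e _).2, ?_,
    infinite_range_of_injective (he.comp heven), infinite_range_of_injective (he.comp hodd)⟩
  refine Set.disjoint_range_iff.2 fun i j h => ?_
  have := he h
  omega

theorem Ultrafilter.exists_eq_pure_of_isCountablyGenerated {α : Type*} (F : Ultrafilter α)
    [(F : Filter α).IsCountablyGenerated] : ∃ p, F = pure p := by
  obtain ⟨x, hx⟩ := (F : Filter α).exists_seq_tendsto
  -- An ultrafilter is minimal among proper filters.
  have hFx : Filter.map x atTop = (F : Filter α) := F.unique hx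
  have range_mem : range x ∈ F := by
    rw [← Ultrafilter.mem_coe, ← hFx]
    exact range_mem_map
  rcases (range x).finite_or_infinite with hfin | hinf
  · obtain ⟨p, -, hp⟩ := F.eq_pure_of_finite_mem hfin range_mem
    exact ⟨p, hp⟩
  have compl_notMem : ∀ t ⊆ range x, t.Infinite → tᶜ ∉ F := by
    intro t hts ht htc
    rw [← Ultrafilter.mem_coe, ← hFx, Filter.mem_map, ← Nat.cofinite_eq_atTop, mem_cofinite,
      ← preimage_compl, compl_compl] at htc
    exact ht.preimage hts htc
  obtain ⟨t₁, ht₁, t₂, ht₂, hdisj, hinf₁, hinf₂⟩ := hinf.exists_disjoint_infinite_subsets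
  exfalso
  rcases F.mem_or_compl_mem t₁ with h | h
  · exact compl_notMem t₂ ht₂ hinf₂ (mem_of_superset h hdisj.subset_compl_right)
  · exact compl_notMem t₁ ht₁ hinf₁ h

theorem isClosed_of_subset_range_of_forall_not_mapClusterPt {X : Type*} [TopologicalSpace X]
    [T1Space X] {y : ℕ → X} (hy : ∀ c, ¬MapClusterPt c atTop y) {t : Set X}
    (ht : t ⊆ range y) : IsClosed t := by
  refine isOpen_compl_iff.1 (isOpen_iff_mem_nhds.2 fun z hz => ?_)
  obtain ⟨V, hV, hyV⟩ : ∃ V ∈ 𝓝 z, ∀ᶠ n in atTop, y n ∉ V := by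
    simpa [mapClusterPt_iff_frequently, Filter.not_frequently] using hy z
  obtain ⟨N, hN⟩ := eventually_atTop.1 hyV
  have hfin : (t ∩ y '' Iio N).Finite := ((finite_Iio N).image y).inter_of_right t
  filter_upwards [hV, hfin.isClosed.compl_mem_nhds fun h => hz h.1] with w hwV hwN hwt
  obtain ⟨n, rfl⟩ := ht hwt
  rcases lt_or_ge n N with hn | hn
  · exact hwN ⟨hwt, n, hn, rfl⟩
  · exact hN n hn hwV

-- `t ⊔ nhdsAdjoint a F` is the finest topology coarser than `t` in which `F` converges to `a`.
theorem nhds_sup_nhdsAdjoint_inf_principal {X : Type*} [t : TopologicalSpace X] {a : X}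
    {F : Filter X} {S : Set X} (hSF : S ∈ F) (haS : a ∉ S) (hS : ∀ s ⊆ S, IsClosed s) :
    @nhds X (t ⊔ nhdsAdjoint a F) a ⊓ 𝓟 S = F := by
  refine le_antisymm (fun A hA => mem_inf_principal'.2 ?_) (le_inf ?_ (le_principal_iff.2 hSF))
  · have hopen : IsOpen (Sᶜ ∪ A) := by
      rw [union_comm, ← compl_sdiff]
      exact (hS _ sdiff_subset).isOpen_compl
    exact @IsOpen.mem_nhds X (t ⊔ nhdsAdjoint a F) _ _
      ⟨hopen, fun _ => mem_of_superset hA subset_union_right⟩ (Or.inl haS)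
  · calc F ≤ pure a ⊔ F := le_sup_right
      _ = @nhds X (nhdsAdjoint a F) a := (nhds_nhdsAdjoint_same a F).symm
      _ ≤ @nhds X (t ⊔ nhdsAdjoint a F) a := nhds_mono le_sup_right

theorem WeaklyReversible.exists_eq_pure_of_tendsto {X : Type u} [t : TopologicalSpace X]
    [FirstCountableTopology X] (hwr : WeaklyReversible X) {f : X → X} (hfb : Bijective f)
    (hf : Continuous f) {a : X} {F : Ultrafilter X} (hfF : Tendsto f F (𝓝 (f a))) {S : Set X}
    (hSF : S ∈ F) (haS : a ∉ S) (hS : ∀ s ⊆ S, IsClosed s) : ∃ p, F = pure p := by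
  obtain ⟨e⟩ := @hwr X (t ⊔ nhdsAdjoint a F) id f bijective_id
    (continuous_id_of_le le_sup_left) hfb
    (continuous_sup_dom.2 ⟨hf, continuous_nhdsAdjoint_dom.2 hfF⟩)
  have : @FirstCountableTopology X (t ⊔ nhdsAdjoint a F) :=
    @IsEmbedding.firstCountableTopology X (t ⊔ nhdsAdjoint a F) X t _ _
      (@Homeomorph.isEmbedding X X (t ⊔ nhdsAdjoint a F) t
        (@Homeomorph.symm X X t (t ⊔ nhdsAdjoint a F) e))
  have : (F : Filter X).IsCountablyGenerated := by
    rw [← nhds_sup_nhdsAdjoint_inf_principal hSF haS hS]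
    infer_instance
  exact F.exists_eq_pure_of_isCountablyGenerated

theorem WeaklyReversible.continuousAt_symm {X : Type u} [TopologicalSpace X]
    [FirstCountableTopology X] [T2Space X] (hwr : WeaklyReversible X) (f : X ≃ X)
    (hf : Continuous f) (a : X) : ContinuousAt f.symm (f a) := by
  by_contra hna
  obtain ⟨U, hU, hfreq⟩ :=
    not_tendsto_iff_exists_frequently_notMem.1 (by simpa [ContinuousAt] using hna)
  obtain ⟨z, hz, hzU⟩ := exists_seq_forall_of_frequently hfreq
  set y := f.symm ∘ z
  have hfy : Tendsto (f ∘ y) atTop (𝓝 (f a)) := by simpa [y, Function.comp_def] using hz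
  have hy : ∀ c, ¬MapClusterPt c atTop y := by
    intro c hc
    obtain rfl : c = a := f.injective <| eq_of_nhds_neBot <|
      (hc.tendsto_comp (hf.tendsto c)).neBot.mono (inf_le_inf_left _ hfy)
    exact (hc.frequently hU).exists.elim hzU
  let F := Ultrafilter.of (Filter.map y atTop)
  have hF : (F : Filter X) ≤ Filter.map y atTop := Ultrafilter.of_le _
  have haS : a ∉ range y := fun ⟨n, hn⟩ => hzU n (hn.symm ▸ mem_of_mem_nhds hU : y n ∈ U)
  obtain ⟨p, hp⟩ := hwr.exists_eq_pure_of_tendsto f.bijective hf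
    ((tendsto_map'_iff.2 hfy).mono_left hF) (hF range_mem_map) haS
    fun _ ht => isClosed_of_subset_range_of_forall_not_mapClusterPt hy ht
  rw [hp] at hF
  exact hy p (neBot_of_le (le_inf (pure_le_nhds p) hF))

theorem WeaklyReversible.continuous_symm {X : Type u} [TopologicalSpace X]
    [FirstCountableTopology X] [T2Space X] (hwr : WeaklyReversible X) (f : X ≃ X)
    (hf : Continuous f) : Continuous f.symm :=
  continuous_iff_continuousAt.2 fun b => by
    simpa using hwr.continuousAt_symm f hf (f.symm b)

/-- every weakly reversible metrizable space is reversible. -/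
theorem stmt_15 {X : Type u} [TopologicalSpace X] [TopologicalSpace.MetrizableSpace X]
    (hwr : ∀ (Y : Type u) [TopologicalSpace Y] (f : X → Y) (g : Y → X),
      Function.Bijective f → Continuous f → Function.Bijective g → Continuous g →
      Nonempty (X ≃ₜ Y)) :
    ∀ f : X ≃ X, Continuous (⇑f) → Continuous (⇑f.symm) :=
  WeaklyReversible.continuous_symm hwr
end

section
/- If (X,O) is strongly reversible (f[O] = O for every bijection f of X) and there exists a closed set F with F ≠ X and |F| = |X|, then O is the discrete topology. -/
open Set Filter TopologicalSpace

variable {X : Type*}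

/-- If two sets have equinumerous bodies and complements, some bijection of `X`
maps one onto the other. -/
lemma exists_equiv_image_eq {S T : Set X} (h1 : Cardinal.mk S = Cardinal.mk T)
    (h2 : Cardinal.mk ↥Sᶜ = Cardinal.mk ↥Tᶜ) : ∃ e : X ≃ X, ⇑e '' S = T := by
  classical
  obtain ⟨e1⟩ := Cardinal.eq.mp h1
  obtain ⟨e2⟩ := Cardinal.eq.mp h2
  refine ⟨(Equiv.Set.sumCompl S).symm.trans ((e1.sumCongr e2).trans (Equiv.Set.sumCompl T)), ?_⟩
  ext y
  constructor
  · rintro ⟨x, hx, rfl⟩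
    simp [Equiv.Set.sumCompl_symm_apply_of_mem hx]
  · intro hy
    refine ⟨(e1.symm ⟨y, hy⟩ : X), (e1.symm ⟨y, hy⟩).2, ?_⟩
    simp [Equiv.Set.sumCompl_symm_apply_of_mem (e1.symm ⟨y, hy⟩).2]

/-- a strongly reversible topology with a closed set F ≠ X of full
cardinality is discrete. -/
theorem stmt_16 (O : TopologicalSpace X)
    (hsr : ∀ f : X ≃ X, imgOpens f O = opensOf O)
    (hF : ∃ F : Set X, O.IsOpen Fᶜ ∧ F ≠ Set.univ ∧ Cardinal.mk F = Cardinal.mk X) :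
    O = ⊥ := by
  classical
  letI := O
  obtain ⟨F, hFo, hFne, hFcard⟩ := hF
  -- openness transfers along cardinality data
  have key : ∀ S : Set X, Cardinal.mk S = Cardinal.mk ↥Fᶜ →
      Cardinal.mk ↥Sᶜ = Cardinal.mk F → IsOpen S := by
    intro S h1 h2
    obtain ⟨e, he⟩ := exists_equiv_image_eq (S := Fᶜ) (T := S) h1.symm
      (by rw [compl_compl]; exact h2.symm)
    have hmem : (⇑e '' Fᶜ) ∈ opensOf O := by
      rw [← hsr e]
      exact ⟨Fᶜ, hFo, rfl⟩
    rwa [he] at hmem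
  -- X is infinite
  have hinf : Infinite X := by
    by_contra h
    have : Finite X := not_infinite_iff_finite.mp h
    obtain ⟨e⟩ := Cardinal.eq.mp hFcard
    have hinj : Function.Injective (fun y : X => (e.symm y : X)) :=
      Subtype.val_injective.comp e.symm.injective
    have hsurj := Finite.surjective_of_injective hinj
    apply hFne
    ext z
    simp only [mem_univ, iff_true]
    obtain ⟨y, hy⟩ := hsurj z
    rw [← hy]
    exact (e.symm y).2
  obtain ⟨p, hp⟩ : ∃ p, p ∈ Fᶜ := by
    rcases ne_univ_iff_exists_notMem F |>.mp hFne with ⟨p, hp⟩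
    exact ⟨p, hp⟩
  -- every singleton is open
  have hsing : ∀ x : X, IsOpen ({x} : Set X) := by
    intro x
    -- split {x}ᶜ into two pieces of full cardinality
    have hxc : Cardinal.mk ↥({x}ᶜ : Set X) = Cardinal.mk X := by
      apply Cardinal.mk_compl_of_infinite
      rw [Cardinal.mk_singleton]
      exact lt_of_lt_of_le Cardinal.one_lt_aleph0 (Cardinal.infinite_iff.mp hinf)
    have hsum : Cardinal.mk (X ⊕ X) = Cardinal.mk ↥({x}ᶜ : Set X) := by
      simp [Cardinal.mk_sum, Cardinal.add_mk_eq_max, hxc]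
    obtain ⟨g⟩ := Cardinal.eq.mp hsum
    set A : Set X := Set.range (fun b : X => (g (Sum.inl b) : X)) with hA
    set B : Set X := Set.range (fun b : X => (g (Sum.inr b) : X)) with hB
    have hAinj : Function.Injective (fun b : X => (g (Sum.inl b) : X)) :=
      Subtype.val_injective.comp (g.injective.comp Sum.inl_injective)
    have hBinj : Function.Injective (fun b : X => (g (Sum.inr b) : X)) :=
      Subtype.val_injective.comp (g.injective.comp Sum.inr_injective)
    have hAcard : Cardinal.mk A = Cardinal.mk X := Cardinal.mk_range_eq _ hAinj
    have hBcard : Cardinal.mk B = Cardinal.mk X := Cardinal.mk_range_eq _ hBinj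
    have hAx : x ∉ A := by
      rintro ⟨b, hb⟩
      exact (g (Sum.inl b)).2 hb
    have hBx : x ∉ B := by
      rintro ⟨b, hb⟩
      exact (g (Sum.inr b)).2 hb
    have hAB : ∀ a, a ∈ A → a ∈ B → False := by
      rintro a ⟨b1, hb1⟩ ⟨b2, hb2⟩
      have : g (Sum.inl b1) = g (Sum.inr b2) := Subtype.ext (hb1.trans hb2.symm)
      exact Sum.inl_ne_inr (g.injective this)
    -- choose subsets of A and B of cardinality #(Fᶜ \ {p})
    have hle : Cardinal.mk ↥(Fᶜ \ {p}) ≤ Cardinal.mk A := by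
      rw [hAcard]
      exact Cardinal.mk_set_le _
    obtain ⟨T₁, hT₁A, hT₁c⟩ := Cardinal.le_mk_iff_exists_subset.mp hle
    obtain ⟨T₂, hT₂B, hT₂c⟩ := Cardinal.le_mk_iff_exists_subset.mp
      (show Cardinal.mk ↥(Fᶜ \ {p}) ≤ Cardinal.mk B by
        rw [hBcard]; exact Cardinal.mk_set_le _)
    -- the two open sets
    have hFc : Cardinal.mk ↥Fᶜ = Cardinal.mk ↥(Fᶜ \ {p}) + 1 := by
      have : Fᶜ = insert p (Fᶜ \ {p}) := by
        rw [insert_diff_singleton, insert_eq_self.mpr hp]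
      conv_lhs => rw [this]
      rw [Cardinal.mk_insert (by simp)]
    have mkS : ∀ T : Set X, T ⊆ {x}ᶜ → Cardinal.mk T = Cardinal.mk ↥(Fᶜ \ {p}) →
        Cardinal.mk ↥(insert x T) = Cardinal.mk ↥Fᶜ := by
      intro T hTs hTc
      rw [Cardinal.mk_insert (fun hxT => hTs hxT rfl), hTc, hFc]
    have complS : ∀ T C : Set X, (∀ a, a ∈ C → a ∈ T → False) → x ∉ C →
        Cardinal.mk C = Cardinal.mk X → Cardinal.mk ↥(insert x T)ᶜ = Cardinal.mk F := by
      intro T C hdisj hxC hCcard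
      rw [hFcard]
      refine le_antisymm (Cardinal.mk_set_le _) ?_
      rw [← hCcard]
      refine Cardinal.mk_le_mk_of_subset ?_
      intro a ha
      simp only [mem_compl_iff, mem_insert_iff, not_or]
      exact ⟨fun h => hxC (h ▸ ha), fun h => hdisj a ha h⟩
    have hS₁ : IsOpen (insert x T₁) := by
      refine key _ (mkS T₁ (fun a ha => ?_) hT₁c) (complS T₁ B (fun a haB haT => hAB a (hT₁A haT) haB) hBx hBcard)
      exact fun h => hAx (h ▸ hT₁A ha)
    have hS₂ : IsOpen (insert x T₂) := by
      refine key _ (mkS T₂ (fun a ha => ?_) hT₂c) (complS T₂ A (fun a haA haT => hAB a haA (hT₂B haT)) hAx hAcard)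
      exact fun h => hBx (h ▸ hT₂B ha)
    have hinter : insert x T₁ ∩ insert x T₂ = {x} := by
      ext a
      simp only [mem_inter_iff, mem_insert_iff, mem_singleton_iff]
      constructor
      · rintro ⟨h1 | h1, h2 | h2⟩
        · exact h1
        · exact h1
        · exact h2
        · exact absurd (hAB a (hT₁A h1) (hT₂B h2)) not_false
      · rintro rfl
        exact ⟨Or.inl rfl, Or.inl rfl⟩
    rw [← hinter]
    exact hS₁.inter hS₂
  exact eq_bot_of_singletons_open hsing
end

section
/- A topology O on a set X is strongly reversible (invariant under all bijections of X) if and only if O is discrete, or antidiscrete, or X is infinite and O = { X ∖ F : |F| < λ } ∪ {∅} for some infinite cardinal λ ≤ |X|. -/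
/-!
Openness of a set `U` under a bijection-invariant topology depends only on the pair
`(#U, #Uᶜ)`, since two sets with the same pair are exchanged by a permutation. If the topology is
not indiscrete, 2-transitivity of the permutation group makes it T₁. A nonempty open set whose
complement is as large as `X` can be moved by a permutation to meet itself in a single point, so
then the topology is discrete. Otherwise every nonempty open set `U` has `#Uᶜ < #X`, and any
`V` with `#Vᶜ ≤ #Uᶜ` is the union of two sets whose complements have exactly the size `#Uᶜ`.
Hence the cardinals `#Uᶜ` of nonempty open sets form a lower set, i.e. an interval `[0, λ)`, and
`λ` is infinite because finite sets are closed.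
-/

open Set Filter TopologicalSpace

variable {X : Type*}

universe u

open Cardinal Topology

namespace Cardinal

theorem exists_perm_image_eq {α : Type*} {U V : Set α} (h : #U = #V) (hc : #↥Uᶜ = #↥Vᶜ) :
    ∃ f : Equiv.Perm α, f '' U = V := by
  classical
  obtain ⟨e⟩ := Cardinal.eq.mp h
  obtain ⟨e'⟩ := Cardinal.eq.mp hc
  refine ⟨Equiv.subtypeCongr e e', (Equiv.image_eq_iff_bijOn _).mpr
    (Equiv.bijOn' _ (fun x hx => ?_) (fun y hy => ?_))⟩
  · simp [Equiv.subtypeCongr, hx]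
  · simp [Equiv.subtypeCongr, hy]

theorem exists_disjoint_subsets_of_add_le {α : Type u} {V : Set α} {c : Cardinal.{u}}
    (h : c + c ≤ #V) :
    ∃ A B : Set α, A ⊆ V ∧ B ⊆ V ∧ Disjoint A B ∧ #A = c ∧ #B = c := by
  obtain ⟨S, hSV, hS⟩ := le_mk_iff_exists_subset.mp h
  obtain ⟨e⟩ := Cardinal.eq.mp (show #(c.out ⊕ c.out) = #S by simp [hS])
  have he : Function.Injective (Subtype.val ∘ e) := Subtype.val_injective.comp e.injective
  have hsub : ∀ a, (e a : α) ∈ V := fun a => hSV (e a).2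
  refine ⟨range (Subtype.val ∘ e ∘ Sum.inl), range (Subtype.val ∘ e ∘ Sum.inr),
    range_subset_iff.mpr fun a => hsub _, range_subset_iff.mpr fun a => hsub _,
    disjoint_range_iff.mpr fun a b hab => Sum.inl_ne_inr (he hab), ?_, ?_⟩
  · exact (mk_range_eq _ (he.comp Sum.inl_injective)).trans (mk_out c)
  · exact (mk_range_eq _ (he.comp Sum.inr_injective)).trans (mk_out c)

theorem mk_eq_of_mk_compl_lt {α : Type*} [Infinite α] {s : Set α} (h : #↥sᶜ < #α) :
    #s = #α := by
  simpa using mk_compl_of_infinite sᶜ h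

end Cardinal

def StronglyReversible (t : TopologicalSpace X) : Prop :=
  ∀ f : X ≃ X, imgOpens f t = opensOf t

theorem stronglyReversible_of_isOpen_iff {t : TopologicalSpace X}
    (P : Cardinal → Cardinal → Prop) (h : ∀ U : Set X, IsOpen[t] U ↔ P #U #↥Uᶜ) :
    StronglyReversible t := by
  have himage (g : X ≃ X) (U : Set X) (hU : IsOpen[t] U) : IsOpen[t] (g '' U) := by
    rwa [h, mk_image_eq g.injective, ← image_compl_eq g.bijective, mk_image_eq g.injective, ← h]
  intro f
  ext V
  exact ⟨by rintro ⟨U, hU, rfl⟩; exact himage f U hU,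
    fun hV => ⟨f.symm '' V, himage _ _ hV, f.image_symm_image V⟩⟩

namespace StronglyReversible

variable [t : TopologicalSpace X] (hO : StronglyReversible t)
include hO

theorem isOpen_image (f : X ≃ X) {U : Set X} (hU : IsOpen U) : IsOpen (f '' U) := by
  have hmem : f '' U ∈ imgOpens f t := mem_image_of_mem _ hU
  rwa [hO f] at hmem

theorem isOpen_of_mk_eq {U V : Set X} (hU : IsOpen U) (h : #U = #V) (hc : #↥Uᶜ = #↥Vᶜ) :
    IsOpen V := by
  obtain ⟨f, rfl⟩ := exists_perm_image_eq h hc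
  exact hO.isOpen_image f hU

theorem t1Space [NontrivialTopology X] : T1Space X := by
  obtain ⟨u, w, U, hU, hu, hw⟩ : ∃ u w U, IsOpen U ∧ u ∈ U ∧ w ∉ U := by
    obtain ⟨x, y, hxy⟩ := ‹NontrivialTopology X›.exists_not_inseparable
    obtain ⟨s, hs, hxy | hyx⟩ := not_inseparable_iff_exists_open.mp hxy
    exacts [⟨x, y, s, hs, hxy⟩, ⟨y, x, s, hs, hyx⟩]
  have huw : u ≠ w := by rintro rfl; exact hw hu
  refine t1Space_iff_exists_open.mpr fun z y hzy => ?_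
  obtain ⟨σ, hσ⟩ := Equiv.Perm.exists_smul_eq_embedding (Function.Embedding.embFinTwo huw)
    (Function.Embedding.embFinTwo hzy)
  have hσu : σ u = z := congrArg (· 0) hσ
  have hσw : σ w = y := congrArg (· 1) hσ
  refine ⟨σ '' U, hO.isOpen_image σ hU, ⟨u, hu, hσu⟩, ?_⟩
  rw [← hσw, σ.injective.mem_set_image]
  exact hw

theorem discreteTopology_of_mk_compl_eq [Infinite X] {U : Set X} (hU : IsOpen U) {x : X}
    (hx : x ∈ U) (hUc : #↥Uᶜ = #X) : DiscreteTopology X := by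
  classical
  obtain ⟨B, C, hB, hC, hBC, hBX, hCX⟩ := exists_disjoint_subsets_of_add_le (c := #X)
    (by rw [add_eq_self (aleph0_le_mk X), hUc])
  obtain ⟨A, hAB, hA⟩ := le_mk_iff_exists_subset.mp ((mk_set_le (U \ {x})).trans hBX.ge)
  have hxA : x ∉ A := fun h => hB (hAB h) hx
  -- `insert x A` has the same cardinal profile as `U` but meets `U` only in `x`.
  have hV : IsOpen (insert x A) := by
    refine hO.isOpen_of_mk_eq hU ?_ ?_
    · rw [mk_insert hxA, hA, ← mk_singleton x, mk_sdiff_add_mk (singleton_subset_iff.mpr hx)]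
    · refine hUc.trans (le_antisymm ?_ (mk_set_le _))
      rw [← hCX]
      refine mk_le_mk_of_subset fun c hc => ?_
      rintro (rfl | hcA)
      · exact hC hc hx
      · exact hBC.ne_of_mem (hAB hcA) hc rfl
  have hUV : U ∩ insert x A = {x} := by
    refine Subset.antisymm (fun y ⟨hyU, hyV⟩ => ?_) (by simp [hx])
    rcases hyV with rfl | hyA
    exacts [rfl, absurd hyU (hB (hAB hyA))]
  have hxo : IsOpen {x} := hUV ▸ hU.inter hV
  refine discreteTopology_iff_isOpen_singleton.mpr fun y => ?_
  simpa using hO.isOpen_image (Equiv.swap x y) hxo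

theorem isOpen_of_mk_compl_le [Infinite X] {U V : Set X} (hU : IsOpen U) (hUc : #↥Uᶜ < #X)
    (hVU : #↥Vᶜ ≤ #↥Uᶜ) : IsOpen V := by
  obtain ⟨c, hc⟩ := exists_add_of_le hVU
  have hcX : c < #X := (hc ▸ le_add_self).trans_lt hUc
  have hcc : c + c ≤ #V := by
    rw [mk_eq_of_mk_compl_lt (hVU.trans_lt hUc)]
    exact (add_lt_of_lt (aleph0_le_mk X) hcX hcX).le
  obtain ⟨A, B, hA, hB, hAB, hAc, hBc⟩ := exists_disjoint_subsets_of_add_le hcc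
  have hdiff : ∀ D ⊆ V, #D = c → IsOpen (V \ D) := by
    intro D hD hDc
    have hcompl : #↥Uᶜ = #↥(V \ D)ᶜ := by
      rw [compl_sdiff, mk_union_of_disjoint (disjoint_compl_right.mono_left hD), hDc, add_comm, hc]
    refine hO.isOpen_of_mk_eq hU ?_ hcompl
    rw [mk_eq_of_mk_compl_lt hUc, mk_eq_of_mk_compl_lt (hcompl ▸ hUc)]
  have hV : V = (V \ A) ∪ (V \ B) := by
    rw [← sdiff_inter, hAB.inter_eq, sdiff_empty]
  exact hV ▸ (hdiff A hA hAc).union (hdiff B hB hBc)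

theorem exists_isOpen_iff_mk_compl_lt [Infinite X] [T1Space X]
    (hsmall : ∀ U : Set X, IsOpen U → U.Nonempty → #↥Uᶜ < #X) :
    ∃ lam : Cardinal, ℵ₀ ≤ lam ∧ lam ≤ #X ∧
      ∀ U : Set X, IsOpen U ↔ U = ∅ ∨ #↥Uᶜ < lam := by
  set S : Set Cardinal := {κ | ∃ U : Set X, IsOpen U ∧ U.Nonempty ∧ #↥Uᶜ = κ}
  have hlower : IsLowerSet S := by
    rintro _ κ hκ ⟨U, hU, hne, rfl⟩
    obtain ⟨T, hT, rfl⟩ := le_mk_iff_exists_subset.mp hκ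
    have hTc : IsOpen Tᶜ := hO.isOpen_of_mk_compl_le hU (hsmall U hU hne) (by simpa using hκ)
    exact ⟨Tᶜ, hTc, hne.mono (subset_compl_comm.mp hT), by simp⟩
  obtain hS | ⟨lam, hS⟩ := hlower.eq_univ_or_Iio
  · obtain ⟨U, hU, hne, hUX⟩ := hS ▸ mem_univ #X
    exact absurd hUX (hsmall U hU hne).ne
  have hmem : ∀ κ, κ ∈ S ↔ κ < lam := fun κ => by rw [hS]; rfl
  refine ⟨lam, aleph0_le.mpr fun n => ?_, not_lt.mp fun hlam => ?_,
    fun U => ⟨fun hU => ?_, ?_⟩⟩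
  · obtain ⟨F, hF⟩ := Infinite.exists_subset_card_eq X n
    refine ((hmem n).mp ⟨(↑F)ᶜ, F.finite_toSet.isClosed.isOpen_compl, ?_, by simp [hF]⟩).le
    exact F.finite_toSet.infinite_compl.nonempty
  · obtain ⟨U, hU, hne, hUX⟩ := (hmem _).mpr hlam
    exact (hsmall U hU hne).ne hUX
  · refine or_iff_not_imp_left.mpr fun hne => (hmem _).mp ?_
    exact ⟨U, hU, nonempty_iff_ne_empty.mpr hne, rfl⟩
  · rintro (rfl | hU)
    · exact isOpen_empty
    · obtain ⟨V, hV, hne, hVU⟩ := (hmem _).mpr hU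
      exact hO.isOpen_of_mk_compl_le hV (hsmall V hV hne) hVU.ge

theorem eq_bot_or_eq_top_or_isOpen_iff_mk_compl_lt :
    t = ⊥ ∨ t = ⊤ ∨ (Infinite X ∧ ∃ lam : Cardinal, ℵ₀ ≤ lam ∧ lam ≤ #X ∧
      ∀ U : Set X, IsOpen U ↔ U = ∅ ∨ #↥Uᶜ < lam) := by
  rcases TopologicalSpace.indiscrete_or_nontrivial X with htop | _
  · exact Or.inr (Or.inl htop.eq_top)
  have := hO.t1Space
  rcases finite_or_infinite X with _ | hinf
  · exact Or.inl DiscreteTopology.eq_bot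
  by_cases hbig : ∃ U : Set X, IsOpen U ∧ U.Nonempty ∧ #↥Uᶜ = #X
  · obtain ⟨U, hU, ⟨x, hx⟩, hUc⟩ := hbig
    have := hO.discreteTopology_of_mk_compl_eq hU hx hUc
    exact Or.inl DiscreteTopology.eq_bot
  push Not at hbig
  refine Or.inr (Or.inr ⟨hinf, hO.exists_isOpen_iff_mk_compl_lt fun U hU hne => ?_⟩)
  exact (mk_set_le _).lt_of_ne (hbig U hU hne)

end StronglyReversible

/-- a topology is strongly reversible iff it is discrete, or
antidiscrete, or X is infinite and it is a generalized cofinite topology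
{ X ∖ F : |F| < λ } ∪ {∅} for some infinite cardinal λ ≤ |X|. -/
theorem stmt_18 {X : Type u} (O : TopologicalSpace X) :
    (∀ f : X ≃ X, imgOpens f O = opensOf O) ↔
      (O = ⊥ ∨ O = ⊤ ∨
        (Infinite X ∧ ∃ lam : Cardinal.{u}, Cardinal.aleph0 ≤ lam ∧
          lam ≤ Cardinal.mk X ∧
          ∀ U : Set X, O.IsOpen U ↔ (U = ∅ ∨ Cardinal.mk ↥(Uᶜ) < lam))) := by
  refine ⟨StronglyReversible.eq_bot_or_eq_top_or_isOpen_iff_mk_compl_lt, ?_⟩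
  rintro (rfl | rfl | ⟨-, lam, -, -, h⟩)
  · exact stronglyReversible_of_isOpen_iff (fun _ _ => True) fun _ => iff_of_true trivial trivial
  · refine stronglyReversible_of_isOpen_iff (fun a b => a = 0 ∨ b = 0) fun U => ?_
    rw [TopologicalSpace.isOpen_top_iff, mk_set_eq_zero_iff, mk_set_eq_zero_iff,
      compl_empty_iff]
  · refine stronglyReversible_of_isOpen_iff (fun a b => a = 0 ∨ b < lam) fun U => ?_
    exact (h U).trans (or_congr_left mk_set_eq_zero_iff.symm)
end
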